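/- The fractional chromatic number of the unit-distance graph on ℝ² is at least 7/2. -/

import Mathlib

/-- A fractional coloring of a finite graph `G` assigns nonnegative weights to
(independent) finsets of vertices so that every vertex is covered by total
weight at least 1.  `fracChromNum G` is the infimum of the total weight. -/
noncomputable def fracChromNum {V : Type*} [Fintype V] [DecidableEq V]
    (G : SimpleGraph V) : ℝ :=
  sInf {t : ℝ | ∃ w : Finset V → ℝ,
    (∀ S, 0 ≤ w S) ∧
    (∀ S, w S ≠ 0 → ∀ u ∈ S, ∀ v ∈ S, ¬ G.Adj u v) ∧
    (∀ v : V, 1 ≤ ∑ S ∈ Finset.univ.filter (fun S => v ∈ S), w S) ∧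
    (∑ S : Finset V, w S = t)}

/-- The unit-distance graph on the Euclidean plane `ℝ²`. -/
def planeGraph : SimpleGraph (EuclideanSpace ℝ (Fin 2)) where
  Adj x y := dist x y = 1
  symm := ⟨fun x y h => by show dist y x = 1; rw [dist_comm]; exact h⟩
  loopless := ⟨fun x h => by simp at h⟩

/-- The fractional chromatic number of the unit-distance graph on `ℝ²`,
defined as the supremum over all finite induced subgraphs. -/
noncomputable def planeFracChrom : ℝ :=
  letI : DecidableEq (EuclideanSpace ℝ (Fin 2)) := Classical.decEq _
  ⨆ s : Finset (EuclideanSpace ℝ (Fin 2)),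
    fracChromNum (planeGraph.induce (s : Set (EuclideanSpace ℝ (Fin 2))))

/-!
The Moser spindle has seven vertices and no three of them are pairwise non-adjacent, so
double counting the cover condition, `7 ≤ ∑ S, #S * w S ≤ 2 * ∑ S, w S`, bounds every fractional
colouring of it below by `7 / 2`. Fractional colourings pull back along graph homomorphisms, and
the spindle maps into the unit-distance graph on seven points of the plane. Since a supremum of an
unbounded family of reals is `0` by convention, we also need the uniform upper bound `9`, which
comes from a periodic colouring of the plane by small squares.
-/

open Finset

section FractionalColoring

variable {V W α : Type*} [Fintype V] [DecidableEq V] [Fintype W] [DecidableEq W]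
  [Fintype α] [DecidableEq α]

structure IsFracColoring (G : SimpleGraph V) (w : Finset V → ℝ) : Prop where
  nonneg : ∀ S, 0 ≤ w S
  indep : ∀ S, w S ≠ 0 → ∀ u ∈ S, ∀ v ∈ S, ¬ G.Adj u v
  cover : ∀ v, 1 ≤ ∑ S ∈ univ.filter (fun S => v ∈ S), w S

variable {G : SimpleGraph V}

theorem fracChromNum_le_sum {w : Finset V → ℝ} (hw : IsFracColoring G w) :
    fracChromNum G ≤ ∑ S, w S :=
  csInf_le ⟨0, by rintro t ⟨w', hw', -, -, rfl⟩; exact sum_nonneg fun S _ => hw' S⟩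
    ⟨w, hw.1, hw.2, hw.3, rfl⟩

/-- Counting colours rather than colour classes makes the total weight exactly `card α`, even
when several classes are empty. -/
def SimpleGraph.Coloring.fracWeight (C : G.Coloring α) (S : Finset V) : ℝ :=
  #(univ.filter fun k => univ.filter (C · = k) = S)

theorem SimpleGraph.Coloring.isFracColoring_fracWeight (C : G.Coloring α) :
    IsFracColoring G C.fracWeight where
  nonneg S := Nat.cast_nonneg _
  indep S hS u hu v hv huv := by
    obtain ⟨k, hk⟩ := card_ne_zero.1 (Nat.cast_ne_zero.1 hS)
    obtain ⟨-, rfl⟩ := mem_filter.1 hk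
    simp only [mem_filter, mem_univ, true_and] at hu hv
    exact C.valid huv (hu.trans hv.symm)
  cover v := by
    have hclass : 1 ≤ C.fracWeight (univ.filter (C · = C v)) :=
      Nat.one_le_cast.2 (card_pos.2 ⟨C v, by simp⟩)
    exact hclass.trans (single_le_sum (f := C.fracWeight) (fun S _ => Nat.cast_nonneg _)
      (mem_filter.2 ⟨mem_univ _, mem_filter.2 ⟨mem_univ _, rfl⟩⟩))

theorem SimpleGraph.Coloring.sum_fracWeight (C : G.Coloring α) :
    ∑ S, C.fracWeight S = Fintype.card α := by
  simp only [SimpleGraph.Coloring.fracWeight]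
  rw [← Nat.cast_sum, ← card_eq_sum_card_fiberwise (fun k _ => mem_univ _), card_univ]

theorem fracChromNum_le_card_of_coloring (C : G.Coloring α) :
    fracChromNum G ≤ Fintype.card α :=
  C.sum_fracWeight ▸ fracChromNum_le_sum C.isFracColoring_fracWeight

theorem fracChromNum_le_of_colorable {n : ℕ} (h : G.Colorable n) : fracChromNum G ≤ n := by
  simpa using fracChromNum_le_card_of_coloring h.some

theorem le_fracChromNum {b : ℝ} (h : ∀ w, IsFracColoring G w → b ≤ ∑ S, w S) :
    b ≤ fracChromNum G := by
  have hC := G.selfColoring.isFracColoring_fracWeight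
  refine le_csInf ⟨_, _, hC.1, hC.2, hC.3, rfl⟩ ?_
  rintro t ⟨w, h0, hind, hcov, rfl⟩
  exact h w ⟨h0, hind, hcov⟩

def comapWeight (f : V → W) (w : Finset W → ℝ) (T : Finset V) : ℝ :=
  ∑ S ∈ univ.filter (fun S => univ.filter (fun v => f v ∈ S) = T), w S

theorem sum_comapWeight (f : V → W) (w : Finset W → ℝ) : ∑ T, comapWeight f w T = ∑ S, w S :=
  sum_fiberwise _ _ _

theorem IsFracColoring.comap {H : SimpleGraph V} {G : SimpleGraph W} {w : Finset W → ℝ}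
    (hw : IsFracColoring G w) (f : H →g G) : IsFracColoring H (comapWeight f w) where
  nonneg T := sum_nonneg fun S _ => hw.nonneg S
  indep T hT u hu v hv huv := by
    obtain ⟨S, hS, hwS⟩ := exists_ne_zero_of_sum_ne_zero hT
    obtain ⟨-, rfl⟩ := mem_filter.1 hS
    exact hw.indep S hwS _ (mem_filter.1 hu).2 _ (mem_filter.1 hv).2 (f.map_adj huv)
  cover v := by
    simpa only [comapWeight, sum_fiberwise_eq_sum_filter, mem_filter, mem_univ, true_and]
      using hw.cover (f v)

theorem fracChromNum_le_of_hom {H : SimpleGraph V} {G : SimpleGraph W} (f : H →g G) :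
    fracChromNum H ≤ fracChromNum G :=
  le_fracChromNum fun w hw => sum_comapWeight f w ▸ fracChromNum_le_sum (hw.comap f)

theorem sum_sum_filter_mem_eq_sum_card_mul (w : Finset V → ℝ) :
    ∑ v, ∑ S ∈ univ.filter (fun S => v ∈ S), w S = ∑ S, #S * w S := by
  rw [sum_comm' (t' := univ) (s' := id) (by simp)]
  simp

theorem card_div_indepNum_le_fracChromNum (G : SimpleGraph V) :
    (Fintype.card V : ℝ) / G.indepNum ≤ fracChromNum G := by
  refine le_fracChromNum fun w hw =>
    div_le_of_le_mul₀ (Nat.cast_nonneg _) (sum_nonneg fun S _ => hw.nonneg S) ?_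
  have hcard (S : Finset V) : #S * w S ≤ G.indepNum * w S := by
    obtain hS | hS := eq_or_ne (w S) 0
    · simp [hS]
    have hind : G.IsIndepSet S := fun u hu v hv _ => hw.indep S hS u hu v hv
    exact mul_le_mul_of_nonneg_right (mod_cast hind.card_le_indepNum) (hw.nonneg S)
  calc (Fintype.card V : ℝ) = ∑ _v : V, 1 := by simp
    _ ≤ ∑ v, ∑ S ∈ univ.filter (fun S => v ∈ S), w S := sum_le_sum fun v _ => hw.cover v
    _ = ∑ S, #S * w S := sum_sum_filter_mem_eq_sum_card_mul w
    _ ≤ ∑ S, G.indepNum * w S := sum_le_sum fun S _ => hcard S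
    _ = (∑ S, w S) * G.indepNum := by rw [← mul_sum, mul_comm]

end FractionalColoring

theorem abs_sub_lt_of_floor_div_cast_eq {n : ℕ} {a b c : ℝ} (hc : 0 < c)
    (h : ((⌊a / c⌋ : ℤ) : ZMod n) = ⌊b / c⌋) (hab : |a - b| ≤ (n - 1) * c) :
    |a - b| < c := by
  set p := ⌊a / c⌋
  set q := ⌊b / c⌋
  have hp := (le_div_iff₀ hc).1 (Int.floor_le (a / c))
  have hp' := (div_lt_iff₀ hc).1 (Int.lt_floor_add_one (a / c))
  have hq := (le_div_iff₀ hc).1 (Int.floor_le (b / c))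
  have hq' := (div_lt_iff₀ hc).1 (Int.lt_floor_add_one (b / c))
  have hfloor : |(p - q) * c - (a - b)| < c := abs_sub_lt_iff.2 ⟨by linarith, by linarith⟩
  obtain hpq | hpq := eq_or_ne p q
  · simpa [hpq, abs_sub_comm] using hfloor
  have hn : (n : ℝ) ≤ |(p : ℝ) - q| := by
    have hdvd : (n : ℤ) ∣ p - q := (ZMod.intCast_eq_intCast_iff_dvd_sub q p n).1 h.symm
    exact_mod_cast Int.le_of_dvd (abs_pos.2 (sub_ne_zero.2 hpq)) ((dvd_abs _ _).2 hdvd)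
  have hsep := abs_sub_abs_le_abs_sub ((p - q) * c) (a - b)
  rw [abs_mul, abs_of_pos hc] at hsep
  nlinarith

theorem planeGraph_adj_iff {x y : EuclideanSpace ℝ (Fin 2)} :
    planeGraph.Adj x y ↔ (x 0 - y 0) ^ 2 + (x 1 - y 1) ^ 2 = 1 := by
  change dist x y = 1 ↔ _
  rw [EuclideanSpace.dist_eq, Real.sqrt_eq_one]
  simp [Fin.sum_univ_two, Real.dist_eq, sq_abs]

/-- Squares of side `7 / 10` coloured periodically with period `3` in both directions: a square
has diameter `< 1`, and two squares of the same colour that differ in some coordinate are more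
than `2 * 7 / 10 > 1` apart in that coordinate. -/
noncomputable def planeGridColoring : planeGraph.Coloring (ZMod 3 × ZMod 3) :=
  SimpleGraph.Coloring.mk (fun x => (⌊x 0 / (7 / 10)⌋, ⌊x 1 / (7 / 10)⌋)) fun {x y} hxy hcol => by
    have hxy := planeGraph_adj_iff.1 hxy
    have hclose (i : Fin 2) (hi : ((⌊x i / (7 / 10)⌋ : ℤ) : ZMod 3) = ⌊y i / (7 / 10)⌋)
        (hsq : (x i - y i) ^ 2 ≤ 1) : (x i - y i) ^ 2 < 49 / 100 := by
      have h1 : |x i - y i| ≤ 1 := (sq_le_one_iff_abs_le_one _).1 hsq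
      have h2 := abs_sub_lt_of_floor_div_cast_eq (by norm_num) hi (by norm_num; linarith)
      nlinarith [abs_nonneg (x i - y i), sq_abs (x i - y i)]
    have hx0 := hclose 0 (congrArg Prod.fst hcol) (by nlinarith)
    have hx1 := hclose 1 (congrArg Prod.snd hcol) (by nlinarith)
    linarith

theorem planeGraph_colorable_nine : planeGraph.Colorable 9 :=
  planeGridColoring.colorable

def moserEdges : List (Fin 7 × Fin 7) :=
  [(0, 1), (0, 2), (1, 2), (1, 3), (2, 3), (0, 4), (0, 5), (4, 5), (4, 6), (5, 6), (3, 6)]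

def moserSpindle : SimpleGraph (Fin 7) := SimpleGraph.fromRel fun i j => (i, j) ∈ moserEdges

instance : DecidableRel moserSpindle.Adj := fun _ _ => inferInstanceAs (Decidable (_ ∧ _))

set_option maxRecDepth 10000 in
theorem moserSpindle_card_le_two_of_isIndepSet {s : Finset (Fin 7)}
    (hs : moserSpindle.IsIndepSet s) : #s ≤ 2 := by
  revert s; decide

theorem moserSpindle_indepNum : moserSpindle.indepNum = 2 := by
  obtain ⟨s, hs⟩ := moserSpindle.exists_isNIndepSet_indepNum
  refine le_antisymm (hs.card_eq ▸ moserSpindle_card_le_two_of_isIndepSet hs.isIndepSet) ?_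
  exact SimpleGraph.IsIndepSet.card_le_indepNum (G := moserSpindle) (t := {0, 3}) (by decide)

theorem seven_halves_le_fracChromNum_moserSpindle : 7 / 2 ≤ fracChromNum moserSpindle := by
  simpa [moserSpindle_indepNum] using card_div_indepNum_le_fracChromNum moserSpindle

/-- Two unit rhombi `0 1 2 3` and `0 4 5 6` with angle `π / 3`, the second turned about `0` so that
the far tips `3` and `6` are at distance one. -/
noncomputable def moserPoint : Fin 7 → EuclideanSpace ℝ (Fin 2) :=
  let a := √3
  let b := √11
  ![!₂[0, 0], !₂[1, 0], !₂[1 / 2, a / 2], !₂[3 / 2, a / 2], !₂[5 / 6, b / 6],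
    !₂[5 / 12 - a * b / 12, (b + 5 * a) / 12], !₂[5 / 4 - a * b / 12, (3 * b + 5 * a) / 12]]

theorem moserPoint_adj {i j : Fin 7} (h : moserSpindle.Adj i j) :
    planeGraph.Adj (moserPoint i) (moserPoint j) := by
  wlog hij : (i, j) ∈ moserEdges generalizing i j
  · exact (this h.symm (h.2.resolve_left hij)).symm
  have ha : √3 ^ 2 = 3 := Real.sq_sqrt (by norm_num)
  have hb : √11 ^ 2 = 11 := Real.sq_sqrt (by norm_num)
  simp only [moserEdges, List.mem_cons, Prod.mk.injEq, List.not_mem_nil, or_false] at hij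
  rcases hij with ⟨rfl, rfl⟩ | ⟨rfl, rfl⟩ | ⟨rfl, rfl⟩ | ⟨rfl, rfl⟩ | ⟨rfl, rfl⟩ | ⟨rfl, rfl⟩ |
    ⟨rfl, rfl⟩ | ⟨rfl, rfl⟩ | ⟨rfl, rfl⟩ | ⟨rfl, rfl⟩ | ⟨rfl, rfl⟩ <;>
  simp only [moserPoint, Matrix.cons_val, planeGraph_adj_iff] <;>
  ring_nf <;> simp only [ha, hb] <;> norm_num

/-- The fractional chromatic number of the unit-distance graph on `ℝ²` is at
least `7/2`. -/
theorem planeFracChrom_ge_seven_halves : 7 / 2 ≤ planeFracChrom := by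
  -- the instance `planeFracChrom` is defined with
  let _ : DecidableEq (EuclideanSpace ℝ (Fin 2)) := Classical.decEq _
  let s := univ.image moserPoint
  let f : moserSpindle →g planeGraph.induce (s : Set (EuclideanSpace ℝ (Fin 2))) :=
    ⟨fun i => ⟨moserPoint i, mem_image_of_mem _ (mem_univ i)⟩, moserPoint_adj⟩
  unfold planeFracChrom
  refine le_trans ?_ (le_ciSup ⟨9, ?_⟩ s)
  · exact seven_halves_le_fracChromNum_moserSpindle.trans (fracChromNum_le_of_hom f)
  rintro _ ⟨t, rfl⟩
  exact_mod_cast fracChromNum_le_of_colorable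
    (planeGraph_colorable_nine.of_hom (SimpleGraph.Embedding.induce _).toHom)
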